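/- arXiv:1812.04762 — 2 statements merged into one kernel-verified Lean document; each statement's English description precedes it below -/
import Mathlib

section
/- Let A ∈ ℝ^{m×n}, let k ≥ 1, and let P ∈ ℝ^{m×(k+1)} and Q ∈ ℝ^{n×(k+1)} have orthonormal columns and satisfy PᵀA = (PᵀAQ)Qᵀ. Set B̄ := PᵀAQ ∈ ℝ^{(k+1)×(k+1)}. If C̄ ∈ ℝ^{(k+1)×(k+1)} is a best rank-k approximation of B̄ in spectral norm (i.e., rank C̄ ≤ k and ‖B̄ − C̄‖ ≤ ‖B̄ − D‖ for every D ∈ ℝ^{(k+1)×(k+1)} with rank D ≤ k), then ‖A − P C̄ Qᵀ‖ ≤ σ_{k+1}(A) + ‖(I_m − PPᵀ)A‖. -/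
open Matrix

/-- Spectral norm (largest singular value) of a real matrix. -/
noncomputable def specNorm {a b : ℕ} (M : Matrix (Fin a) (Fin b) ℝ) : ℝ :=
  ‖LinearMap.toContinuousLinearMap (Matrix.toEuclideanLin M)‖

/-- The `j`-th largest singular value of a real matrix (`j ≥ 1`), characterized via the
Eckart–Young theorem as the minimal spectral-norm distance to matrices of rank `< j`;
it is `0` when `j` exceeds the smaller dimension. -/
noncomputable def singVal {a b : ℕ} (M : Matrix (Fin a) (Fin b) ℝ) (j : ℕ) : ℝ :=
  sInf {r : ℝ | ∃ D : Matrix (Fin a) (Fin b) ℝ, D.rank < j ∧ r = specNorm (M - D)}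

/-- The matrix of the first `k` columns of `M`. -/
def colSub {a b : ℕ} (M : Matrix (Fin a) (Fin b) ℝ) (k : ℕ) (hk : k ≤ b) :
    Matrix (Fin a) (Fin k) ℝ :=
  M.submatrix id fun j => ⟨j.1, lt_of_lt_of_le j.2 hk⟩

/-- The leading `r × c` submatrix of `M`. -/
def subUL {a b : ℕ} (M : Matrix (Fin a) (Fin b) ℝ) (r c : ℕ) (hr : r ≤ a) (hc : c ≤ b) :
    Matrix (Fin r) (Fin c) ℝ :=
  M.submatrix (fun i => ⟨i.1, lt_of_lt_of_le i.2 hr⟩) (fun j => ⟨j.1, lt_of_lt_of_le j.2 hc⟩)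

/-! With `B = PᵀAQ`, the hypothesis `PᵀA = BQᵀ` splits `A - PCQᵀ` as `(I - PPᵀ)A + P(B - C)Qᵀ`,
and `P`, `Qᵀ` are contractions, so it suffices that `‖B - C‖ ≤ σ_{k+1}(A)`. Optimality of `C`
gives `‖B - C‖ ≤ σ_{k+1}(B)`, and compressing a competitor `D` of rank `≤ k` for `A` to the
competitor `PᵀDQ` for `B` gives `σ_{k+1}(B) ≤ σ_{k+1}(A)`. -/

open scoped Matrix.Norms.L2Operator

namespace Matrix

variable {𝕜 l m n p : Type*} [RCLike 𝕜] [Fintype l] [Fintype m] [Fintype n] [Fintype p]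
  [DecidableEq n]

lemma l2_opNorm_one_le : ‖(1 : Matrix n n 𝕜)‖ ≤ 1 := by
  have h := l2_opNorm_conjTranspose_mul_self (1 : Matrix n n 𝕜)
  rw [conjTranspose_one, one_mul] at h
  nlinarith [norm_nonneg (1 : Matrix n n 𝕜)]

lemma l2_opNorm_le_one_of_conjTranspose_mul_self_eq_one {P : Matrix m n 𝕜}
    (hP : Pᴴ * P = 1) : ‖P‖ ≤ 1 := by
  have h := l2_opNorm_conjTranspose_mul_self P
  rw [hP] at h
  nlinarith [l2_opNorm_one_le (n := n) (𝕜 := 𝕜), norm_nonneg P]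

lemma l2_opNorm_mul_mul_le_of_le_one [DecidableEq m] [DecidableEq p] {U : Matrix l m 𝕜}
    {V : Matrix n p 𝕜} (hU : ‖U‖ ≤ 1) (hV : ‖V‖ ≤ 1) (M : Matrix m n 𝕜) : ‖U * M * V‖ ≤ ‖M‖ :=
  calc ‖U * M * V‖ ≤ ‖U * M‖ * ‖V‖ := l2_opNorm_mul _ _
    _ ≤ ‖U‖ * ‖M‖ * 1 := mul_le_mul (l2_opNorm_mul _ _) hV (norm_nonneg _) (by positivity)
    _ ≤ ‖M‖ := by nlinarith [norm_nonneg M]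

end Matrix

lemma specNorm_eq_l2_opNorm {a b : ℕ} (M : Matrix (Fin a) (Fin b) ℝ) : specNorm M = ‖M‖ := rfl

lemma singVal_succ_mul_mul_le {a b c d : ℕ} {U : Matrix (Fin c) (Fin a) ℝ}
    {V : Matrix (Fin b) (Fin d) ℝ} (hU : ‖U‖ ≤ 1) (hV : ‖V‖ ≤ 1) (A : Matrix (Fin a) (Fin b) ℝ)
    (k : ℕ) : singVal (U * A * V) (k + 1) ≤ singVal A (k + 1) := by
  refine le_csInf ⟨specNorm (A - 0), 0, by simp, rfl⟩ ?_
  rintro _ ⟨D, hD, rfl⟩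
  have hUDV : (U * D * V).rank < k + 1 :=
    ((rank_mul_le_left _ _).trans (rank_mul_le_right _ _)).trans_lt hD
  have hbdd : BddBelow {r : ℝ | ∃ E, E.rank < k + 1 ∧ r = specNorm (U * A * V - E)} :=
    ⟨0, by rintro _ ⟨E, -, rfl⟩; exact norm_nonneg _⟩
  refine (csInf_le hbdd ⟨U * D * V, hUDV, rfl⟩).trans ?_
  simp only [specNorm_eq_l2_opNorm]
  rw [← Matrix.sub_mul, ← Matrix.mul_sub]
  exact Matrix.l2_opNorm_mul_mul_le_of_le_one hU hV _

lemma specNorm_sub_le_singVal_succ {a b : ℕ} {B C : Matrix (Fin a) (Fin b) ℝ} {k : ℕ}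
    (hC : ∀ D : Matrix (Fin a) (Fin b) ℝ, D.rank ≤ k → specNorm (B - C) ≤ specNorm (B - D)) :
    specNorm (B - C) ≤ singVal B (k + 1) :=
  le_csInf ⟨specNorm (B - 0), 0, by simp, rfl⟩ fun _ ⟨D, hD, hr⟩ =>
    hr ▸ hC D (Nat.lt_succ_iff.mp hD)

theorem truncated_projected_approx_error_le_sigma_A_general
    (m n k : ℕ)
    (A : Matrix (Fin m) (Fin n) ℝ)
    (P : Matrix (Fin m) (Fin (k + 1)) ℝ) (hP : Pᵀ * P = 1)
    (Q : Matrix (Fin n) (Fin (k + 1)) ℝ) (hQ : Qᵀ * Q = 1)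
    (hPA : Pᵀ * A = (Pᵀ * A * Q) * Qᵀ)
    (C : Matrix (Fin (k + 1)) (Fin (k + 1)) ℝ)
    (hCbest : ∀ D : Matrix (Fin (k + 1)) (Fin (k + 1)) ℝ, D.rank ≤ k →
      specNorm (Pᵀ * A * Q - C) ≤ specNorm (Pᵀ * A * Q - D)) :
    specNorm (A - P * C * Qᵀ) ≤ singVal A (k + 1) + specNorm ((1 - P * Pᵀ) * A) := by
  have hPn : ‖P‖ ≤ 1 := Matrix.l2_opNorm_le_one_of_conjTranspose_mul_self_eq_one hP
  have hQn : ‖Q‖ ≤ 1 := Matrix.l2_opNorm_le_one_of_conjTranspose_mul_self_eq_one hQ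
  have hPtn : ‖Pᵀ‖ ≤ 1 := by
    rwa [← conjTranspose_eq_transpose_of_trivial, l2_opNorm_conjTranspose]
  have hQtn : ‖Qᵀ‖ ≤ 1 := by
    rwa [← conjTranspose_eq_transpose_of_trivial, l2_opNorm_conjTranspose]
  have hPPA : P * (Pᵀ * A) = P * (Pᵀ * A * Q) * Qᵀ :=
    (congrArg (P * ·) hPA).trans (Matrix.mul_assoc _ _ _).symm
  have hdecomp : A - P * C * Qᵀ = (1 - P * Pᵀ) * A + P * (Pᵀ * A * Q - C) * Qᵀ := by
    rw [Matrix.sub_mul, Matrix.one_mul, Matrix.mul_sub, Matrix.sub_mul, Matrix.mul_assoc P Pᵀ A,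
      hPPA]
    abel
  calc specNorm (A - P * C * Qᵀ)
      ≤ specNorm ((1 - P * Pᵀ) * A) + specNorm (Pᵀ * A * Q - C) := by
        simp only [hdecomp, specNorm_eq_l2_opNorm]
        grw [norm_add_le, Matrix.l2_opNorm_mul_mul_le_of_le_one hPn hQtn]
    _ ≤ specNorm ((1 - P * Pᵀ) * A) + singVal (Pᵀ * A * Q) (k + 1) := by
        grw [specNorm_sub_le_singVal_succ hCbest]
    _ ≤ singVal A (k + 1) + specNorm ((1 - P * Pᵀ) * A) := by
        grw [singVal_succ_mul_mul_le hPtn hQn A k, add_comm]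

/-- if `P, Q` have orthonormal columns, `PᵀA = (PᵀAQ)Qᵀ`, and `C̄` is a best
rank-`k` spectral-norm approximation of `B̄ = PᵀAQ`, then
`‖A - P C̄ Qᵀ‖ ≤ σ_{k+1}(A) + ‖(I - PPᵀ)A‖`. -/
theorem truncated_projected_approx_error_le_sigma_A
    (m n k : ℕ) (hk : 1 ≤ k)
    (A : Matrix (Fin m) (Fin n) ℝ)
    (P : Matrix (Fin m) (Fin (k + 1)) ℝ) (hP : Pᵀ * P = 1)
    (Q : Matrix (Fin n) (Fin (k + 1)) ℝ) (hQ : Qᵀ * Q = 1)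
    (hPA : Pᵀ * A = (Pᵀ * A * Q) * Qᵀ)
    (C : Matrix (Fin (k + 1)) (Fin (k + 1)) ℝ) (hCrank : C.rank ≤ k)
    (hCbest : ∀ D : Matrix (Fin (k + 1)) (Fin (k + 1)) ℝ, D.rank ≤ k →
      specNorm (Pᵀ * A * Q - C) ≤ specNorm (Pᵀ * A * Q - D)) :
    specNorm (A - P * C * Qᵀ) ≤ singVal A (k + 1) + specNorm ((1 - P * Pᵀ) * A) :=
  truncated_projected_approx_error_le_sigma_A_general m n k A P hP Q hQ hPA C hCbest
end

section
/- Improved accuracy bound for the transposed truncated randomized SVD: let A ∈ ℝ^{m×n}, let k ≥ 1 and p ≥ 0 be integers with ℓ := k + p ≤ min{m, n}, and let P ∈ ℝ^{n×ℓ} have orthonormal columns. Let C be a best rank-k approximation of AP ∈ ℝ^{m×ℓ} in spectral norm (rank C ≤ k and ‖AP − C‖ ≤ ‖AP − D‖ for every D of rank ≤ k), and set A_(k) := C Pᵀ. Then ‖A − A_(k)‖ ≤ σ_{k+1}(AP) + ‖A(I_n − PPᵀ)‖, and moreover σ_{n−p+1}(A) ≤ σ_{k+1}(AP) ≤ σ_{k+1}(A).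 -/
open Matrix
open scoped Matrix.Norms.L2Operator

/-!
Since `A - C Pᵀ = (A P - C) Pᵀ + A (I - P Pᵀ)` and `Pᵀ` is a contraction, the error is at most
`‖A P - C‖ + ‖A (I - P Pᵀ)‖`, and optimality of `C` bounds `‖A P - C‖` by `σ_{k+1}(A P)`.
For any `D` of rank `≤ k` the same identity shows that `D Pᵀ + A (I - P Pᵀ)` lies within
`‖A P - D‖` of `A`; its rank is at most `k + (n - k - p)` because `I - P Pᵀ` annihilates the
`k + p` independent columns of `P`, which gives the lower bound on `σ_{k+1}(A P)`. The upper
bound holds because right multiplication by the contraction `P` turns rank-`k` approximants of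
`A` into rank-`k` approximants of `A P`.
-/

namespace Matrix

variable {R ι κ ν : Type*}

theorem rank_add_le [Field R] [Fintype ι] [Fintype κ] (M N : Matrix ι κ R) :
    (M + N).rank ≤ M.rank + N.rank := by
  have hrange : LinearMap.range (M + N).mulVecLin ≤
      LinearMap.range M.mulVecLin ⊔ LinearMap.range N.mulVecLin := by
    rintro x ⟨v, rfl⟩
    rw [mulVecLin_add]
    exact Submodule.add_mem_sup ⟨v, rfl⟩ ⟨v, rfl⟩
  exact (Submodule.finrank_mono hrange).trans (Submodule.finrank_add_le_finrank_add_finrank _ _)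

theorem sub_mul_transpose_eq_add [CommRing R] [Fintype κ] [Fintype ν] [DecidableEq κ]
    (A : Matrix ι κ R) (P : Matrix κ ν R) (C : Matrix ι ν R) :
    A - C * Pᵀ = (A * P - C) * Pᵀ + A * (1 - P * Pᵀ) := by
  rw [Matrix.sub_mul, Matrix.mul_sub, Matrix.mul_one, ← Matrix.mul_assoc]
  abel

theorem rank_one_sub_mul_transpose_add_card_le [Field R] [Fintype κ] [Fintype ν] [DecidableEq κ]
    [DecidableEq ν] {P : Matrix κ ν R} (hP : Pᵀ * P = 1) :
    (1 - P * Pᵀ).rank + Fintype.card ν ≤ Fintype.card κ := by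
  have hkill : (1 - P * Pᵀ) * P = 0 := by
    rw [Matrix.sub_mul, Matrix.one_mul, Matrix.mul_assoc, hP, Matrix.mul_one, sub_self]
  have hrank : Fintype.card ν ≤ P.rank := by
    simpa [hP] using rank_mul_le_right Pᵀ P
  have := rank_add_rank_le_card_of_mul_eq_zero hkill
  omega

end Matrix

section SpectralNorm

variable {a b c : ℕ}

theorem specNorm_eq_norm (M : Matrix (Fin a) (Fin b) ℝ) : specNorm M = ‖M‖ := rfl

theorem specNorm_mul_le (M : Matrix (Fin a) (Fin b) ℝ) (N : Matrix (Fin b) (Fin c) ℝ) :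
    specNorm (M * N) ≤ specNorm M * specNorm N :=
  l2_opNorm_mul M N

theorem specNorm_transpose (M : Matrix (Fin a) (Fin b) ℝ) : specNorm Mᵀ = specNorm M := by
  simpa [specNorm_eq_norm, conjTranspose_eq_transpose_of_trivial] using l2_opNorm_conjTranspose M

theorem specNorm_le_one_of_transpose_mul_self_eq_one {P : Matrix (Fin a) (Fin b) ℝ}
    (hP : Pᵀ * P = 1) : specNorm P ≤ 1 := by
  have hsq : specNorm P * specNorm P ≤ 1 := by
    have hone : ‖(1 : Matrix (Fin b) (Fin b) ℝ)‖ ≤ 1 := by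
      rw [← diagonal_one, l2_opNorm_diagonal]
      exact pi_norm_le_iff_of_nonneg zero_le_one |>.mpr fun _ => by simp
    simpa [specNorm_eq_norm, ← l2_opNorm_conjTranspose_mul_self, conjTranspose_eq_transpose_of_trivial, hP]
      using hone
  nlinarith [norm_nonneg P]

theorem specNorm_mul_le_of_specNorm_le_one (M : Matrix (Fin a) (Fin b) ℝ)
    {N : Matrix (Fin b) (Fin c) ℝ} (hN : specNorm N ≤ 1) : specNorm (M * N) ≤ specNorm M :=
  (specNorm_mul_le M N).trans (mul_le_of_le_one_right (norm_nonneg M) hN)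

end SpectralNorm

section SingularValue

variable {a b c : ℕ}

theorem singVal_le_specNorm_sub (M : Matrix (Fin a) (Fin b) ℝ) {D : Matrix (Fin a) (Fin b) ℝ}
    {j : ℕ} (hD : D.rank < j) : singVal M j ≤ specNorm (M - D) :=
  csInf_le ⟨0, by rintro r ⟨E, -, rfl⟩; exact norm_nonneg _⟩ ⟨D, hD, rfl⟩

theorem le_singVal {M : Matrix (Fin a) (Fin b) ℝ} {j : ℕ} (hj : 0 < j) {r : ℝ}
    (h : ∀ D : Matrix (Fin a) (Fin b) ℝ, D.rank < j → r ≤ specNorm (M - D)) :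
    r ≤ singVal M j :=
  le_csInf ⟨_, 0, by simpa using hj, rfl⟩ fun _ ⟨D, hD, hr⟩ => hr ▸ h D hD

theorem specNorm_sub_le_singVal_of_forall_le {M C : Matrix (Fin a) (Fin b) ℝ} {k : ℕ}
    (hC : ∀ D : Matrix (Fin a) (Fin b) ℝ, D.rank ≤ k → specNorm (M - C) ≤ specNorm (M - D)) :
    specNorm (M - C) ≤ singVal M (k + 1) :=
  le_singVal k.succ_pos fun D hD => hC D (Nat.lt_succ_iff.mp hD)

theorem singVal_mul_le_of_specNorm_le_one (M : Matrix (Fin a) (Fin b) ℝ)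
    {N : Matrix (Fin b) (Fin c) ℝ} (hN : specNorm N ≤ 1) {j : ℕ} (hj : 0 < j) :
    singVal (M * N) j ≤ singVal M j :=
  le_singVal hj fun D hD =>
    calc singVal (M * N) j ≤ specNorm (M * N - D * N) :=
          singVal_le_specNorm_sub _ ((rank_mul_le_left D N).trans_lt hD)
      _ ≤ specNorm (M - D) := by
          rw [← Matrix.sub_mul]; exact specNorm_mul_le_of_specNorm_le_one _ hN

theorem singVal_le_singVal_mul_of_transpose_mul_self_eq_one (A : Matrix (Fin a) (Fin b) ℝ)
    {P : Matrix (Fin b) (Fin c) ℝ} (hP : Pᵀ * P = 1) {j : ℕ} (hj : 0 < j) :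
    singVal A (b - c + j) ≤ singVal (A * P) j := by
  have hPt : specNorm Pᵀ ≤ 1 :=
    specNorm_transpose P ▸ specNorm_le_one_of_transpose_mul_self_eq_one hP
  have hcompl := rank_one_sub_mul_transpose_add_card_le hP
  simp only [Fintype.card_fin] at hcompl
  refine le_singVal hj fun D hD => ?_
  have hrank : (D * Pᵀ + A * (1 - P * Pᵀ)).rank < b - c + j := by
    have := rank_add_le (D * Pᵀ) (A * (1 - P * Pᵀ))
    have := rank_mul_le_left D Pᵀ
    have := rank_mul_le_right A (1 - P * Pᵀ)
    omega
  calc singVal A (b - c + j) ≤ specNorm (A - (D * Pᵀ + A * (1 - P * Pᵀ))) :=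
        singVal_le_specNorm_sub A hrank
    _ = specNorm ((A * P - D) * Pᵀ) := by
        rw [← sub_sub, sub_mul_transpose_eq_add A P D, add_sub_cancel_right]
    _ ≤ specNorm (A * P - D) := specNorm_mul_le_of_specNorm_le_one _ hPt

end SingularValue

theorem randomized_truncated_svd_error_bound_transposed_general
    (m n k p : ℕ) (hl : k + p ≤ min m n)
    (A : Matrix (Fin m) (Fin n) ℝ)
    (P : Matrix (Fin n) (Fin (k + p)) ℝ) (hP : Pᵀ * P = 1)
    (C : Matrix (Fin m) (Fin (k + p)) ℝ)
    (hCbest : ∀ D : Matrix (Fin m) (Fin (k + p)) ℝ, D.rank ≤ k →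
      specNorm (A * P - C) ≤ specNorm (A * P - D)) :
    specNorm (A - C * Pᵀ) ≤ singVal (A * P) (k + 1) + specNorm (A * (1 - P * Pᵀ)) ∧
    singVal A (n - p + 1) ≤ singVal (A * P) (k + 1) ∧
    singVal (A * P) (k + 1) ≤ singVal A (k + 1) := by
  have hPnorm := specNorm_le_one_of_transpose_mul_self_eq_one hP
  have hPtnorm : specNorm Pᵀ ≤ 1 := specNorm_transpose P ▸ hPnorm
  refine ⟨?_, ?_, singVal_mul_le_of_specNorm_le_one A hPnorm k.succ_pos⟩
  · calc specNorm (A - C * Pᵀ)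
        ≤ specNorm ((A * P - C) * Pᵀ) + specNorm (A * (1 - P * Pᵀ)) := by
          rw [sub_mul_transpose_eq_add A P C]; exact norm_add_le ((A * P - C) * Pᵀ) _
      _ ≤ singVal (A * P) (k + 1) + specNorm (A * (1 - P * Pᵀ)) := by
          gcongr
          exact (specNorm_mul_le_of_specNorm_le_one _ hPtnorm).trans
            (specNorm_sub_le_singVal_of_forall_le hCbest)
  · have hindex : n - p + 1 = n - (k + p) + (k + 1) := by omega
    rw [hindex]
    exact singVal_le_singVal_mul_of_transpose_mul_self_eq_one A hP k.succ_pos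

/-- improved accuracy bound for the transposed truncated randomized SVD.  With
`ℓ = k + p ≤ min{m,n}`, `P` an `n × ℓ` matrix with orthonormal columns, and `C` a best rank-`k`
spectral-norm approximation of `AP`, the truncated approximation `A_(k) = C Pᵀ` satisfies
`‖A - A_(k)‖ ≤ σ_{k+1}(AP) + ‖A(I - PPᵀ)‖` and `σ_{n-p+1}(A) ≤ σ_{k+1}(AP) ≤ σ_{k+1}(A)`. -/
theorem randomized_truncated_svd_error_bound_transposed
    (m n k p : ℕ) (hk : 1 ≤ k) (hl : k + p ≤ min m n)
    (A : Matrix (Fin m) (Fin n) ℝ)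
    (P : Matrix (Fin n) (Fin (k + p)) ℝ) (hP : Pᵀ * P = 1)
    (C : Matrix (Fin m) (Fin (k + p)) ℝ) (hCrank : C.rank ≤ k)
    (hCbest : ∀ D : Matrix (Fin m) (Fin (k + p)) ℝ, D.rank ≤ k →
      specNorm (A * P - C) ≤ specNorm (A * P - D)) :
    specNorm (A - C * Pᵀ) ≤ singVal (A * P) (k + 1) + specNorm (A * (1 - P * Pᵀ)) ∧
    singVal A (n - p + 1) ≤ singVal (A * P) (k + 1) ∧
    singVal (A * P) (k + 1) ≤ singVal A (k + 1) :=
  randomized_truncated_svd_error_bound_transposed_general m n k p hl A P hP C hCbest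
end
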